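/- Suppose 𝒜 ⊆ E^∞ is strategically Ramsey and for some sequence Δ > 0 the set Int_Δ(𝒜) is large. Then there is a block subspace X such that II has a strategy in Gowers' game G_X to play in 𝒜. -/

import Mathlib

section Defs

variable {𝔽 : Type} [Field 𝔽] {E : Type} [AddCommGroup E] [Module 𝔽 E]

/-- The support of a vector with respect to the basis `b`. -/
noncomputable def supp (b : Module.Basis ℕ 𝔽 E) (x : E) : Finset ℕ :=
  (b.repr x).support

/-- `VecLt b x y` means `x < y`: every element of the support of `x` is smaller than
every element of the support of `y`. -/
def VecLt (b : Module.Basis ℕ 𝔽 E) (x y : E) : Prop :=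
  ∀ m ∈ supp b x, ∀ n ∈ supp b y, m < n

/-- `NatLt b k x` means `k < x`: `k` is smaller than every element of the support of `x`. -/
def NatLt (b : Module.Basis ℕ 𝔽 E) (k : ℕ) (x : E) : Prop :=
  ∀ n ∈ supp b x, k < n

/-- An infinite block sequence: a sequence of nonzero vectors with `x n < x (n + 1)`. -/
def IsBlockSeq (b : Module.Basis ℕ 𝔽 E) (x : ℕ → E) : Prop :=
  (∀ n, x n ≠ 0) ∧ ∀ n, VecLt b (x n) (x (n + 1))

/-- A finite block sequence: a list of nonzero vectors, consecutively increasing in the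
block ordering. -/
def IsFinBlockSeq (b : Module.Basis ℕ 𝔽 E) (l : List E) : Prop :=
  (∀ x ∈ l, x ≠ 0) ∧ l.Chain' (VecLt b)

/-- A block subspace: a subspace spanned by an infinite block sequence. -/
def IsBlockSubspace (b : Module.Basis ℕ 𝔽 E) (X : Submodule 𝔽 E) : Prop :=
  ∃ y : ℕ → E, IsBlockSeq b y ∧ X = Submodule.span 𝔽 (Set.range y)

/-- The list of the first `n` values of a sequence. -/
def hist {α : Type _} (x : ℕ → α) (n : ℕ) : List α :=
  List.ofFn (fun j : Fin n => x j)

/-- The concatenation of a finite prefix with an infinite sequence. -/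
def prefCat {α : Type _} (l : List α) (x : ℕ → α) : ℕ → α := fun n =>
  if h : n < l.length then l.get ⟨n, h⟩ else x (n - l.length)

/-- Player II has a strategy in Gowers' game `G_X(pre)` below `X` to play in `A`:
player I plays infinite-dimensional subspaces `Y i ≤ X`, player II answers with a
nonzero vector of `Y i`, the vectors played by II forming a block sequence, and the
outcome (the prefix `pre` followed by II's vectors) lies in `A`. -/
def IIWinsG (b : Module.Basis ℕ 𝔽 E) (X : Submodule 𝔽 E) (pre : List E) (A : Set (ℕ → E)) :
    Prop :=
  ∃ σ : List (Submodule 𝔽 E) → E,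
    ∀ Y : ℕ → Submodule 𝔽 E,
      (∀ i, Y i ≤ X ∧ ¬FiniteDimensional 𝔽 ↥(Y i)) →
      (∀ i, σ (hist Y (i + 1)) ∈ Y i ∧ σ (hist Y (i + 1)) ≠ 0 ∧
          VecLt b (σ (hist Y (i + 1))) (σ (hist Y (i + 2)))) ∧
        prefCat pre (fun i => σ (hist Y (i + 1))) ∈ A

/-- Player I has a strategy in the infinite asymptotic game `F_X(pre)` below `X` to play
in `A`: player I plays strictly increasing natural numbers `n i`, player II answers with
nonzero vectors of `X` with `n i < x i` forming a block sequence, and the outcome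
(the prefix `pre` followed by II's vectors) lies in `A`. -/
def IWinsF (b : Module.Basis ℕ 𝔽 E) (X : Submodule 𝔽 E) (pre : List E) (A : Set (ℕ → E)) :
    Prop :=
  ∃ σ : List E → ℕ,
    ∀ x : ℕ → E,
      (∀ i, x i ∈ X ∧ x i ≠ 0 ∧ NatLt b (σ (hist x i)) (x i) ∧
          VecLt b (x i) (x (i + 1))) →
      (∀ i, σ (hist x i) < σ (hist x (i + 1))) ∧ prefCat pre x ∈ A

/-- A set `A ⊆ E^∞` is strategically Ramsey if for every block subspace `V` and every
finite block sequence `z`, there is a block subspace `W ≤ V` such that either II has a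
strategy in `G_W(z)` to play in `A`, or I has a strategy in `F_W(z)` to play in `Aᶜ`. -/
def StrategicallyRamsey (b : Module.Basis ℕ 𝔽 E) (A : Set (ℕ → E)) : Prop :=
  ∀ V : Submodule 𝔽 E, IsBlockSubspace b V → ∀ z : List E, IsFinBlockSeq b z →
    ∃ W : Submodule 𝔽 E, W ≤ V ∧ IsBlockSubspace b W ∧
      (IIWinsG b W z A ∨ IWinsF b W z Aᶜ)

/-- `𝔅(X)`: the set of infinite block sequences of vectors of `X` of norm at most `1`. -/
def BlockSeqIn (b : Module.Basis ℕ 𝔽 E) (Nm : E → ℝ) (X : Submodule 𝔽 E) : Set (ℕ → E) :=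
  {x | IsBlockSeq b x ∧ ∀ i, x i ∈ X ∧ Nm (x i) ≤ 1}

/-- The `Δ`-expansion `A_Δ` of a set `A ⊆ E^∞`. -/
def Expand (Nm : E → ℝ) (Δ : ℕ → ℝ) (A : Set (ℕ → E)) : Set (ℕ → E) :=
  {z | ∃ x ∈ A, ∀ i, Nm (x i - z i) < Δ i}

/-- A set `A ⊆ E^∞` is large if it meets `𝔅(X)` for every block subspace `X`. -/
def Large (b : Module.Basis ℕ 𝔽 E) (Nm : E → ℝ) (A : Set (ℕ → E)) : Prop :=
  ∀ X : Submodule 𝔽 E, IsBlockSubspace b X → (A ∩ BlockSeqIn b Nm X).Nonempty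

end Defs

/-! If the conclusion failed, strategic Ramseyness applied to `E` would give a block subspace `W`
spanned by a block sequence `u` and a strategy `σ` for I in `F_W` to play in `∼𝒜`. Pass to the
block subspace `Y` spanned by a fast subsequence `u ∘ j`. A normalised block sequence `x` of `Y`
is spanned by consecutive windows of `u ∘ j`, the `i`-th one starting at an index `≥ i`. The unit
ball of the span of a window has a finite net of any precision (balls of a subfield of `ℝ` are
totally bounded), so `x i` lies within `Δ i` of a net point `y i`; choosing `j m` larger than every
answer of `σ` to histories made of net points of windows below `m` makes `(y i)` a legal run of
`F_W` against `σ`. Hence `𝔅(Y) ⊆ (∼𝒜)_Δ`, so `Int_Δ(𝒜)` misses `𝔅(Y)` and is not large. -/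

open Submodule

section Blocks

variable {𝔽 : Type} [Field 𝔽] {E : Type} [AddCommGroup E] [Module 𝔽 E] {b : Module.Basis ℕ 𝔽 E}

lemma supp_nonempty (b : Module.Basis ℕ 𝔽 E) {x : E} (hx : x ≠ 0) : (supp b x).Nonempty := by
  simpa [supp, Finset.nonempty_iff_ne_empty] using hx

lemma exists_mem_supp_of_mem_span {s : Set E} {x : E} (hx : x ∈ span 𝔽 s) :
    ∀ n ∈ supp b x, ∃ v ∈ s, n ∈ supp b v := by
  induction hx using Submodule.span_induction with
  | mem v hv => exact fun n hn => ⟨v, hv, hn⟩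
  | zero => simp [supp]
  | add x y _ _ ihx ihy =>
    intro n hn
    rcases Finset.mem_union.1 (Finsupp.support_add (by simpa [supp] using hn)) with h | h
    exacts [ihx n h, ihy n h]
  | smul a x _ ih =>
    intro n hn
    simp only [supp, map_smul] at hn
    exact ih n (Finsupp.support_smul hn)

lemma VecLt.mono {x y x' y' : E} (h : VecLt b x y) (hx : supp b x' ⊆ supp b x)
    (hy : supp b y' ⊆ supp b y) : VecLt b x' y' :=
  fun m hm n hn => h m (hx hm) n (hy hn)

lemma VecLt.trans {x y z : E} (hxy : VecLt b x y) (hyz : VecLt b y z) (hy : y ≠ 0) :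
    VecLt b x z := by
  obtain ⟨k, hk⟩ := supp_nonempty b hy
  exact fun m hm n hn => (hxy m hm k hk).trans (hyz k hk n hn)

lemma VecLt.irrefl {x : E} (hx : x ≠ 0) : ¬VecLt b x x := by
  obtain ⟨k, hk⟩ := supp_nonempty b hx
  exact fun h => lt_irrefl k (h k hk k hk)

lemma isBlockSeq_basis (b : Module.Basis ℕ 𝔽 E) : IsBlockSeq b b := by
  have hsupp (n : ℕ) : supp b (b n) = {n} := by
    rw [supp, b.repr_self, Finsupp.support_single _ one_ne_zero]
  refine ⟨b.ne_zero, fun n k hk l hl => ?_⟩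
  rw [hsupp, Finset.mem_singleton] at hk hl
  omega

namespace IsBlockSeq

variable {u : ℕ → E} (hu : IsBlockSeq b u)
include hu

lemma vecLt_of_lt {i j : ℕ} (h : i < j) : VecLt b (u i) (u j) := by
  induction j, h using Nat.le_induction with
  | base => exact hu.2 i
  | succ j _ ih => exact ih.trans (hu.2 j) (hu.1 j)

lemma lt_of_vecLt {i j : ℕ} (h : VecLt b (u i) (u j)) : i < j := by
  by_contra! hji
  rcases hji.lt_or_eq with hlt | rfl
  · exact VecLt.irrefl (hu.1 i) (h.trans (hu.vecLt_of_lt hlt) (hu.1 _))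
  · exact VecLt.irrefl (hu.1 _) h

lemma le_of_mem_supp {j n : ℕ} (hn : n ∈ supp b (u j)) : j ≤ n := by
  induction j generalizing n with
  | zero => exact n.zero_le
  | succ j ih =>
    obtain ⟨k, hk⟩ := supp_nonempty b (hu.1 j)
    exact (ih hk).trans_lt (hu.2 j k hk n hn)

lemma comp_strictMono {j : ℕ → ℕ} (hj : StrictMono j) : IsBlockSeq b (u ∘ j) :=
  ⟨fun n => hu.1 (j n), fun n => hu.vecLt_of_lt (hj n.lt_succ_self)⟩

lemma notMem_supp_of_ne {i k n : ℕ} (hik : i ≠ k) (hn : n ∈ supp b (u k)) :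
    n ∉ supp b (u i) := fun hn' => by
  rcases hik.lt_or_gt with h | h
  exacts [lt_irrefl n (hu.vecLt_of_lt h n hn' n hn), lt_irrefl n (hu.vecLt_of_lt h n hn n hn')]

lemma supp_subset_supp_sum (c : ℕ →₀ 𝔽) {k : ℕ} (hk : k ∈ c.support) :
    supp b (u k) ⊆ supp b (c.sum fun i a => a • u i) := by
  intro n hn
  have hcoord : b.repr (c.sum fun i a => a • u i) n = c k * b.repr (u k) n := by
    rw [map_finsuppSum, Finsupp.sum_apply, Finsupp.sum, Finset.sum_eq_single_of_mem k hk]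
    · simp
    · intro i _ hik
      have := hu.notMem_supp_of_ne hik hn
      simp_all [supp]
  simp only [supp, Finsupp.mem_support_iff] at hn ⊢
  rw [hcoord]
  exact mul_ne_zero (Finsupp.mem_support_iff.1 hk) hn

lemma exists_windows {x : ℕ → E} (hx : IsBlockSeq b x) (hxu : ∀ i, x i ∈ span 𝔽 (Set.range u)) :
    ∃ m : ℕ → ℕ, StrictMono m ∧ ∀ i, x i ∈ span 𝔽 (u '' Set.Ico (m i) (m (i + 1))) := by
  choose c hc using fun i => Finsupp.mem_span_range_iff_exists_finsupp.1 (hxu i)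
  have hne : ∀ i, (c i).support.Nonempty := fun i => by
    rw [Finset.nonempty_iff_ne_empty, Ne, Finsupp.support_eq_empty]
    rintro h
    exact hx.1 i (by rw [← hc i, h, Finsupp.sum_zero_index])
  set m := fun i => (c i).support.min' (hne i)
  have hsupp : ∀ i, ∀ k ∈ (c i).support, supp b (u k) ⊆ supp b (x i) := fun i k hk => by
    rw [← hc i]; exact hu.supp_subset_supp_sum (c i) hk
  have hlt : ∀ i, ∀ k ∈ (c i).support, k < m (i + 1) := fun i k hk =>
    hu.lt_of_vecLt ((hx.2 i).mono (hsupp i k hk) (hsupp (i + 1) _ (Finset.min'_mem _ _)))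
  refine ⟨m, strictMono_nat_of_lt_succ fun i => ?_, fun i => ?_⟩
  · have hmax := Finset.max'_mem _ (hne i)
    exact (Finset.min'_le _ _ hmax).trans_lt (hlt i _ hmax)
  · rw [← hc i]
    refine Submodule.finsuppSum_mem _ _ _ _ fun k hk => Submodule.smul_mem _ _ (subset_span ?_)
    rw [← Finsupp.mem_support_iff] at hk
    exact ⟨k, ⟨Finset.min'_le _ _ hk, hlt i k hk⟩, rfl⟩

lemma natLt_of_mem_span {s : Set ℕ} {y : E} {N : ℕ} (hy : y ∈ span 𝔽 (u '' s))
    (hs : ∀ k ∈ s, N < k) : NatLt b N y := by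
  intro n hn
  obtain ⟨_, ⟨k, hk, rfl⟩, hnk⟩ := exists_mem_supp_of_mem_span hy n hn
  exact (hs k hk).trans_le (hu.le_of_mem_supp hnk)

lemma vecLt_of_mem_span {s t : Set ℕ} {y y' : E} (hy : y ∈ span 𝔽 (u '' s))
    (hy' : y' ∈ span 𝔽 (u '' t)) (hst : ∀ k ∈ s, ∀ k' ∈ t, k < k') : VecLt b y y' := by
  intro n hn n' hn'
  obtain ⟨_, ⟨k, hk, rfl⟩, hnk⟩ := exists_mem_supp_of_mem_span hy n hn
  obtain ⟨_, ⟨k', hk', rfl⟩, hnk'⟩ := exists_mem_supp_of_mem_span hy' n' hn'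
  exact hu.vecLt_of_lt (hst k hk k' hk') n hnk n' hnk'

end IsBlockSeq

end Blocks

lemma Subfield.totallyBounded_closedBall (𝕂 : Subfield ℝ) (M : ℝ) :
    TotallyBounded (Metric.closedBall (0 : 𝕂) M) := by
  convert totallyBounded_preimage (isUniformEmbedding_subtype_val (p := (· ∈ 𝕂))).isUniformInducing
    (isCompact_closedBall (0 : ℝ) M).totallyBounded using 1
  ext x
  simp [dist_eq_norm]

lemma Subfield.exists_ne_zero_norm_lt (𝕂 : Subfield ℝ) {ε : ℝ} (hε : 0 < ε) :
    ∃ r : 𝕂, r ≠ 0 ∧ ‖r‖ < ε := by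
  obtain ⟨n, hn⟩ := exists_nat_one_div_lt hε
  refine ⟨((n : 𝕂) + 1)⁻¹, by positivity, ?_⟩
  simpa [norm_inv, abs_of_pos (Nat.cast_add_one_pos (α := ℝ) n)] using hn

section Nets

variable {𝕂 : Subfield ℝ} {E : Type*} [AddCommGroup E] [Module 𝕂 E] (p : Seminorm 𝕂 E)

def HasFiniteNets (V : Submodule 𝕂 E) : Prop :=
  ∀ R δ : ℝ, 0 < δ → ∃ N : Set E, N.Finite ∧ N ⊆ V ∧ ∀ v ∈ V, p v ≤ R → ∃ y ∈ N, p (v - y) < δ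

variable {p}

lemma hasFiniteNets_bot : HasFiniteNets p ⊥ := fun _ _ hδ =>
  ⟨{0}, Set.finite_singleton 0, by simp, fun v hv _ => ⟨0, rfl, by simpa [(mem_bot 𝕂).1 hv]⟩⟩

lemma HasFiniteNets.span_insert_of_forall_exists_lt {s : Set E} {a : E}
    (hs : HasFiniteNets p (span 𝕂 s)) (ha : ∀ ε > 0, ∃ z ∈ span 𝕂 s, p (a - z) < ε) :
    HasFiniteNets p (span 𝕂 (insert a s)) := by
  intro R δ hδ
  obtain ⟨N, hNfin, hNs, hN⟩ := hs (R + δ) (δ / 2) (by positivity)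
  refine ⟨N, hNfin, hNs.trans (span_mono (Set.subset_insert a s)), fun v hv hvR => ?_⟩
  obtain ⟨c, z, hz, rfl⟩ := mem_span_insert.1 hv
  obtain ⟨z', hz', hz'a⟩ := ha (δ / 2 / (‖c‖ + 1)) (by positivity)
  have hclose : p (c • a + z - (c • z' + z)) < δ / 2 :=
    calc p (c • a + z - (c • z' + z)) = ‖c‖ * p (a - z') := by
          rw [← map_smul_eq_mul, smul_sub, add_sub_add_right_eq_sub]
      _ ≤ (‖c‖ + 1) * p (a - z') := by gcongr; linarith
      _ < (‖c‖ + 1) * (δ / 2 / (‖c‖ + 1)) := by gcongr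
      _ = δ / 2 := by field_simp
  have hbound : p (c • z' + z) ≤ R + δ := by
    linarith [le_map_add_map_sub p (c • z' + z) (c • a + z), map_sub_rev p (c • z' + z) (c • a + z)]
  obtain ⟨y, hyN, hy⟩ := hN _ (add_mem (smul_mem _ c hz') hz) hbound
  have htri := map_add_le_add p (c • a + z - (c • z' + z)) (c • z' + z - y)
  rw [sub_add_sub_cancel] at htri
  exact ⟨y, hyN, htri.trans_lt (by linarith)⟩

lemma norm_mul_le_seminorm_smul_add {V : Submodule 𝕂 E} {a : E} {ε : ℝ}
    (ha : ∀ z ∈ V, ε ≤ p (a - z)) (c : 𝕂) {z : E} (hz : z ∈ V) : ‖c‖ * ε ≤ p (c • a + z) := by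
  rcases eq_or_ne c 0 with rfl | hc
  · simp
  have : c • a + z = c • (a - (-c⁻¹) • z) := by
    rw [smul_sub, smul_smul, mul_neg, mul_inv_cancel₀ hc, neg_smul, one_smul, sub_neg_eq_add]
  rw [this, map_smul_eq_mul]
  exact mul_le_mul_of_nonneg_left (ha _ (V.smul_mem _ hz)) (norm_nonneg c)

lemma HasFiniteNets.span_insert_of_forall_le {s : Set E} {a : E} {ε : ℝ}
    (hs : HasFiniteNets p (span 𝕂 s)) (hε : 0 < ε) (ha : ∀ z ∈ span 𝕂 s, ε ≤ p (a - z)) :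
    HasFiniteNets p (span 𝕂 (insert a s)) := by
  intro R δ hδ
  obtain ⟨G, -, hGfin, hG⟩ := Metric.finite_approx_of_totallyBounded
    (Subfield.totallyBounded_closedBall 𝕂 (R / ε)) (δ / 2 / (p a + 1)) (by positivity)
  obtain ⟨N, hNfin, hNs, hN⟩ := hs (R + R / ε * p a) (δ / 2) (by positivity)
  refine ⟨Set.image2 (fun q y => q • a + y) G N, hGfin.image2 _ hNfin, ?_, fun v hv hvR => ?_⟩
  · rintro _ ⟨q, -, y, hy, rfl⟩
    exact mem_span_insert.2 ⟨q, y, hNs hy, rfl⟩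
  obtain ⟨c, z, hz, rfl⟩ := mem_span_insert.1 hv
  have hc : ‖c‖ ≤ R / ε := by
    rw [le_div_iff₀ hε]
    exact (norm_mul_le_seminorm_smul_add ha c hz).trans hvR
  obtain ⟨q, hqG, hcq⟩ := Set.mem_iUnion₂.1 (hG (mem_closedBall_zero_iff.2 hc))
  rw [Metric.mem_ball, dist_eq_norm] at hcq
  have hzR : p z ≤ R + R / ε * p a := by
    have := le_map_add_map_sub p z (c • a + z)
    rw [sub_add_cancel_right, map_neg_eq_map, map_smul_eq_mul] at this
    nlinarith [apply_nonneg p a]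
  obtain ⟨y, hyN, hy⟩ := hN z hz hzR
  refine ⟨q • a + y, ⟨q, hqG, y, hyN, rfl⟩, ?_⟩
  have hqa : ‖c - q‖ * p a < δ / 2 :=
    calc ‖c - q‖ * p a ≤ ‖c - q‖ * (p a + 1) := by gcongr; linarith
      _ < δ / 2 / (p a + 1) * (p a + 1) := by gcongr
      _ = δ / 2 := by field_simp
  calc p (c • a + z - (q • a + y)) = p ((c - q) • a + (z - y)) := by rw [sub_smul]; abel_nf
    _ ≤ ‖c - q‖ * p a + p (z - y) := (map_add_le_add p _ _).trans_eq (by rw [map_smul_eq_mul])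
    _ < δ := by linarith

-- Either `a` is in the `p`-closure of `span s`, whose nets then suffice, or it is at positive
-- distance from `span s`, which bounds the coefficient of `a` in a vector of bounded seminorm.
lemma HasFiniteNets.span_insert {s : Set E} (hs : HasFiniteNets p (span 𝕂 s)) (a : E) :
    HasFiniteNets p (span 𝕂 (insert a s)) := by
  by_cases ha : ∀ ε > 0, ∃ z ∈ span 𝕂 s, p (a - z) < ε
  · exact hs.span_insert_of_forall_exists_lt ha
  · push Not at ha
    obtain ⟨ε, hε, ha⟩ := ha
    exact hs.span_insert_of_forall_le hε ha

lemma hasFiniteNets_span {s : Set E} (hs : s.Finite) : HasFiniteNets p (span 𝕂 s) := by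
  induction s, hs using Set.Finite.induction_on with
  | empty => simpa using hasFiniteNets_bot
  | insert _ _ ih => exact ih.span_insert _

lemma HasFiniteNets.exists_ne_zero {V : Submodule 𝕂 E} (hV : HasFiniteNets p V) {δ : ℝ}
    (hδ : 0 < δ) : ∃ N : Set E, N.Finite ∧ N ⊆ V ∧
      ∀ v ∈ V, v ≠ 0 → p v ≤ 1 → ∃ y ∈ N, y ≠ 0 ∧ p (v - y) < δ := by
  obtain ⟨N, hNfin, hNV, hN⟩ := hV 1 (δ / 2) (by positivity)
  by_cases hV0 : ∃ a ∈ V, a ≠ 0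
  swap
  · push Not at hV0
    exact ⟨∅, Set.finite_empty, Set.empty_subset _, fun v hv hv0 => absurd (hV0 v hv) hv0⟩
  obtain ⟨a, haV, ha0⟩ := hV0
  obtain ⟨r, hr0, hr⟩ := Subfield.exists_ne_zero_norm_lt 𝕂 (ε := δ / 2 / (p a + 1)) (by positivity)
  have hra : p (r • a) < δ / 2 :=
    calc p (r • a) = ‖r‖ * p a := map_smul_eq_mul p r a
      _ ≤ ‖r‖ * (p a + 1) := by gcongr; linarith
      _ < δ / 2 / (p a + 1) * (p a + 1) := by gcongr
      _ = δ / 2 := by field_simp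
  refine ⟨insert (r • a) N, hNfin.insert _, Set.insert_subset (V.smul_mem r haV) hNV,
    fun v hv _ hv1 => ?_⟩
  obtain ⟨y, hyN, hy⟩ := hN v hv hv1
  by_cases hy0 : y = 0
  · refine ⟨r • a, Set.mem_insert _ _, smul_ne_zero hr0 ha0, ?_⟩
    rw [hy0, sub_zero] at hy
    linarith [map_sub_le_add p v (r • a)]
  · exact ⟨y, Set.mem_insert_of_mem _ hyN, hy0, by linarith⟩

end Nets

lemma prefCat_nil {α : Type*} (x : ℕ → α) : prefCat [] x = x :=
  funext fun n => by simp [prefCat]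

lemma exists_strictMono_forall_lt_hist (F : List ℕ → ℕ) :
    ∃ j : ℕ → ℕ, StrictMono j ∧ ∀ m, F (hist j m) < j m := by
  let g : ℕ → List ℕ := fun m => Nat.rec [] (fun _ l => l ++ [F l + l.sum + 1]) m
  let j m := F (g m) + (g m).sum + 1
  have hg : ∀ m, g m = hist j m := by
    intro m
    induction m with
    | zero => rfl
    | succ m ih =>
      change g m ++ [j m] = _
      rw [ih, hist, hist, List.ofFn_succ_last]
      rfl
  refine ⟨j, strictMono_nat_of_lt_succ fun m => ?_, fun m => ?_⟩
  · have : j m ≤ (g (m + 1)).sum := List.le_sum_of_mem (by simp [g, j])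
    exact Nat.lt_succ_of_le (this.trans (Nat.le_add_left _ _))
  · rw [← hg]
    exact Nat.lt_succ_of_le (Nat.le_add_right _ _)

lemma List.finite_length_le_forall_mem {α : Type*} {S : Set α} (hS : S.Finite) (n : ℕ) :
    {l : List α | l.length ≤ n ∧ ∀ v ∈ l, v ∈ S}.Finite := by
  have : Finite S := hS
  refine ((List.finite_length_le S n).image (List.map Subtype.val)).subset ?_
  rintro l ⟨hn, hS⟩
  exact ⟨l.pmap Subtype.mk hS, by simpa using hn, by rw [List.map_pmap]; simp⟩

lemma exists_pos_le_of_le {Δ : ℕ → ℝ} (hΔ : ∀ i, 0 < Δ i) :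
    ∃ ε : ℕ → ℝ, (∀ a, 0 < ε a) ∧ ∀ ⦃i a⦄, i ≤ a → ε a ≤ Δ i :=
  ⟨fun a => (Finset.range (a + 1)).inf' Finset.nonempty_range_add_one Δ,
    fun _ => (Finset.lt_inf'_iff _).2 fun i _ => hΔ i,
    fun _ _ h => Finset.inf'_le _ (Finset.mem_range.2 (Nat.lt_succ_of_le h))⟩

lemma exists_strictMono_dominating {α : Type*} (σ : List α → ℕ) (N : ℕ → Set ℕ → Set α)
    (hN : ∀ a t, t.Finite → (N a t).Finite) :
    ∃ j : ℕ → ℕ, StrictMono j ∧ ∀ m (h : List α), h.length ≤ m →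
      (∀ v ∈ h, ∃ a c, a < c ∧ c ≤ m ∧ v ∈ N a (j '' Set.Ico a c)) → σ h < j m := by
  let S (l : List ℕ) : Set α :=
    ⋃ c ∈ Set.Iic l.length, ⋃ a ∈ Set.Iio c, N a ((l.getD · 0) '' Set.Ico a c)
  have hS (l : List ℕ) : (S l).Finite := (Set.finite_Iic _).biUnion fun c _ =>
    (Set.finite_Iio c).biUnion fun a _ => hN a _ ((Set.finite_Ico a c).image _)
  choose B hB using fun l => ((List.finite_length_le_forall_mem (hS l) l.length).image σ).bddAbove
  obtain ⟨j, hj, hjB⟩ := exists_strictMono_forall_lt_hist B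
  refine ⟨j, hj, fun m h hlen hh => ?_⟩
  refine (hB (hist j m) ⟨h, ⟨by simpa [hist] using hlen, fun v hv => ?_⟩, rfl⟩).trans_lt (hjB m)
  obtain ⟨a, c, hac, hcm, hv⟩ := hh v hv
  have hwin : (fun k => (hist j m).getD k 0) '' Set.Ico a c = j '' Set.Ico a c :=
    Set.image_congr fun k hk => by simp [hist, hk.2.trans_le hcm]
  exact Set.mem_biUnion (x := c) (by simpa [hist] using hcm) (Set.mem_biUnion hac (hwin ▸ hv))

section Construction

variable {𝕂 : Subfield ℝ} {E : Type} [AddCommGroup E] [Module 𝕂 E] {b : Module.Basis ℕ 𝕂 E}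
  {p : Seminorm 𝕂 E}

theorem IWinsF.exists_blockSeqIn_subset_expand {u : ℕ → E} (hu : IsBlockSeq b u)
    {B : Set (ℕ → E)} (hB : IWinsF b (span 𝕂 (Set.range u)) [] B) {Δ : ℕ → ℝ}
    (hΔ : ∀ i, 0 < Δ i) :
    ∃ Y, IsBlockSubspace b Y ∧ BlockSeqIn b p Y ⊆ Expand p Δ B := by
  obtain ⟨σ, hσ⟩ := hB
  choose! net hnet_fin hnet_sub hnet using fun (s : Set E) (hs : s.Finite) (δ : ℝ) (hδ : 0 < δ) =>
    (hasFiniteNets_span (p := p) hs).exists_ne_zero hδ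
  obtain ⟨ε, hε, hεΔ⟩ := exists_pos_le_of_le hΔ
  obtain ⟨j, hj, hjσ⟩ := exists_strictMono_dominating σ (fun a t => net (u '' t) (ε a))
    fun a t ht => hnet_fin _ (ht.image u) _ (hε a)
  refine ⟨span 𝕂 (Set.range (u ∘ j)), ⟨_, hu.comp_strictMono hj, rfl⟩, ?_⟩
  rintro x ⟨hx, hxY⟩
  obtain ⟨m, hm, hxm⟩ := (hu.comp_strictMono hj).exists_windows hx fun i => (hxY i).1
  let win (i : ℕ) : Set ℕ := j '' Set.Ico (m i) (m (i + 1))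
  have hwin (i : ℕ) : (u '' win i).Finite := ((Set.finite_Ico _ _).image j).image u
  choose y hyN hy0 hxy using fun i => hnet _ (hwin i) _ (hε (m i)) (x i)
    (by rw [Set.image_image]; exact hxm i) (hx.1 i) (hxY i).2
  have hy (i : ℕ) : y i ∈ span 𝕂 (u '' win i) := hnet_sub _ (hwin i) _ (hε _) (hyN i)
  have hlegal (i : ℕ) : y i ∈ span 𝕂 (Set.range u) ∧ y i ≠ 0 ∧
      NatLt b (σ (hist y i)) (y i) ∧ VecLt b (y i) (y (i + 1)) := by
    refine ⟨span_mono (Set.image_subset_range _ _) (hy i), hy0 i,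
      hu.natLt_of_mem_span (hy i) ?_, hu.vecLt_of_mem_span (hy i) (hy (i + 1)) ?_⟩
    · rintro _ ⟨k, hk, rfl⟩
      refine (hjσ (m i) (hist y i) (by simpa [hist] using hm.id_le i) ?_).trans_le
        (hj.monotone hk.1)
      intro v hv
      obtain ⟨i', rfl⟩ := List.mem_ofFn.1 hv
      exact ⟨m i', m (i' + 1), hm (Nat.lt_succ_self _), hm.monotone i'.isLt, hyN i'⟩
    · rintro _ ⟨k, hk, rfl⟩ _ ⟨k', hk', rfl⟩
      exact hj (hk.2.trans_le hk'.1)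
  refine ⟨y, prefCat_nil y ▸ (hσ y hlegal).2, fun i => ?_⟩
  rw [map_sub_rev]
  exact (hxy i).trans_le (hεΔ (hm.id_le i))

end Construction

theorem IIWinsG_of_strategicallyRamsey_of_large_general
    (𝕂 : Subfield ℝ)
    {E : Type} [AddCommGroup E] [Module 𝕂 E]
    (b : Module.Basis ℕ 𝕂 E) (Nm : E → ℝ)
    (hNadd : ∀ x y : E, Nm (x + y) ≤ Nm x + Nm y)
    (hNsmul : ∀ (a : 𝕂) (x : E), Nm (a • x) = |(a : ℝ)| * Nm x)
    (A : Set (ℕ → E)) (hA : StrategicallyRamsey b A)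
    (Δ : ℕ → ℝ) (hΔ : ∀ i, 0 < Δ i)
    (hlarge : Large b Nm (Expand Nm Δ Aᶜ)ᶜ) :
    ∃ X : Submodule 𝕂 E, IsBlockSubspace b X ∧ IIWinsG b X [] A := by
  obtain ⟨W, -, ⟨u, hu, rfl⟩, hII | hI⟩ :=
    hA ⊤ ⟨b, isBlockSeq_basis b, b.span_eq.symm⟩ [] ⟨by simp, List.isChain_nil⟩
  · exact ⟨_, ⟨u, hu, rfl⟩, hII⟩
  obtain ⟨Y, hY, hYexp⟩ :=
    hI.exists_blockSeqIn_subset_expand (p := Seminorm.of Nm hNadd hNsmul) hu hΔ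
  obtain ⟨x, hxA, hxY⟩ := hlarge Y hY
  exact (hxA (hYexp hxY)).elim

theorem IIWinsG_of_strategicallyRamsey_of_large
    (𝕂 : Subfield ℝ) [Countable 𝕂]
    {E : Type} [AddCommGroup E] [Module 𝕂 E]
    (b : Module.Basis ℕ 𝕂 E) (Nm : E → ℝ)
    (hN0 : ∀ x : E, Nm x = 0 ↔ x = 0)
    (hNadd : ∀ x y : E, Nm (x + y) ≤ Nm x + Nm y)
    (hNsmul : ∀ (a : 𝕂) (x : E), Nm (a • x) = |(a : ℝ)| * Nm x)
    (hNval : ∀ x : E, Nm x ∈ 𝕂)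
    (A : Set (ℕ → E)) (hA : StrategicallyRamsey b A)
    (Δ : ℕ → ℝ) (hΔ : ∀ i, 0 < Δ i)
    (hlarge : Large b Nm (Expand Nm Δ Aᶜ)ᶜ) :
    ∃ X : Submodule 𝕂 E, IsBlockSubspace b X ∧ IIWinsG b X [] A :=
  IIWinsG_of_strategicallyRamsey_of_large_general 𝕂 b Nm hNadd hNsmul A hA Δ hΔ hlarge
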